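/- The neighborhood of χ(∅) in the skeleton of P(Γ) is exactly {χ({u}) : u ∈ V}, and the map u ↦ χ({u}) is a graph isomorphism from the complement graph of Γ to the subgraph induced by the skeleton on this neighborhood. -/

import Mathlib

open Set

noncomputable section

variable {V : Type*}

/-- Characteristic vector of a set of nodes. -/
def chi (S : Set V) : V → ℝ := S.indicator (fun _ => (1 : ℝ))

/-- The candidate vertex set of the polytope `P(Γ)`. -/
def polyVerts (G : SimpleGraph V) : Set (V → ℝ) :=
  {x | x = chi (∅ : Set V) ∨ (∃ v : V, x = chi {v}) ∨
        (∃ u w : V, G.Adj u w ∧ x = chi {u, w})}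

/-- The polytope `P(Γ)`. -/
def poly (G : SimpleGraph V) : Set (V → ℝ) := convexHull ℝ (polyVerts G)

/-- Two points are adjacent vertices of a convex set `P` when the segment
joining them is a (1-dimensional) face, i.e. an extreme subset of `P`. -/
def AdjVert (P : Set (V → ℝ)) (p q : V → ℝ) : Prop :=
  p ≠ q ∧ IsExtreme ℝ P (segment ℝ p q)

/-- A combinatorial automorphism of `P`: a bijection of the vertex (extreme point)
set of `P` mapping the vertex set of each face onto the vertex set of some face. -/
def IsCombAut (P : Set (V → ℝ)) (σ : (V → ℝ) → (V → ℝ)) : Prop :=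
  Set.BijOn σ (P.extremePoints ℝ) (P.extremePoints ℝ) ∧
  ∀ F : Set (V → ℝ), IsExtreme ℝ P F →
    ∃ F' : Set (V → ℝ), IsExtreme ℝ P F' ∧
      σ '' (F ∩ P.extremePoints ℝ) = F' ∩ P.extremePoints ℝ

/-- An automorphism of the skeleton of `P`: a bijection of the vertex set of `P`
preserving adjacency (in both directions). -/
def IsSkelAut (P : Set (V → ℝ)) (σ : (V → ℝ) → (V → ℝ)) : Prop :=
  Set.BijOn σ (P.extremePoints ℝ) (P.extremePoints ℝ) ∧
  ∀ p ∈ P.extremePoints ℝ, ∀ q ∈ P.extremePoints ℝ,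
    (AdjVert P p q ↔ AdjVert P (σ p) (σ q))

/-!
Write `e_u = χ({u})`. Every face needed is cut out of `P(Γ)` by inequalities valid on all of it:
`[0, e_u]` by `x_w = 0` for `w ≠ u` (coordinates are nonnegative), `{e_u}` additionally by
`x_u ≤ 1`, and for a non-edge `uv` the segment `[e_u, e_v]` by `x_w = 0` for `w ∉ {u, v}` together
with `x_u + x_v ≤ 1`, which holds on the generators exactly because `uv` is not an edge.
Conversely, for an edge `uv` the segments `[0, e_u + e_v]` and `[e_u, e_v]` have the same
midpoint, so a face containing one of them contains the endpoints of the other; this rules out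
both `0 ~ e_u + e_v` and `e_u ~ e_v`. Extreme points of `P(Γ)` lie among its generators, so the
neighbours of `0` are exactly the `e_u`.
-/

section ExtremeSets

variable {𝕜 E : Type*} [Field 𝕜] [LinearOrder 𝕜] [IsStrictOrderedRing 𝕜]
  [AddCommGroup E] [Module 𝕜 E] {A : Set E}

theorem isExtreme_setOf_eq_of_le (l : E →ₗ[𝕜] 𝕜) {r : 𝕜} (h : ∀ x ∈ A, l x ≤ r) :
    IsExtreme 𝕜 A {x ∈ A | l x = r} := by
  refine ⟨fun x hx => hx.1, ?_⟩
  rintro y hy z hz - ⟨-, hr⟩ ⟨a, b, ha, hb, hab, rfl⟩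
  have hsum : a * l y + b * l z = r := by simpa using hr
  have hy' := h y hy
  have hz' := mul_le_mul_of_nonneg_left (h z hz) hb.le
  refine ⟨hy, le_antisymm hy' (le_of_mul_le_mul_left ?_ ha)⟩
  linear_combination hz' - hsum + r * hab

theorem isExtreme_setOf_forall_apply_eq_zero {ι : Type*} {P : Set (ι → 𝕜)}
    (hP : ∀ x ∈ P, 0 ≤ x) (S : Set ι) :
    IsExtreme 𝕜 P {x ∈ P | ∀ i ∉ S, x i = 0} := by
  refine ⟨fun x hx => hx.1, ?_⟩
  rintro y hy z hz - ⟨-, h0⟩ ⟨a, b, ha, hb, -, rfl⟩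
  refine ⟨hy, fun i hi => ?_⟩
  have hsum : a * y i + b * z i = 0 := by simpa using h0 i hi
  have hyi : 0 ≤ y i := hP y hy i
  have hzi : 0 ≤ z i := hP z hz i
  nlinarith

theorem IsExtreme.mem_segment_of_midpoint_eq [Invertible (2 : 𝕜)] {p q p' q' : E}
    (h : IsExtreme 𝕜 A (segment 𝕜 p q)) (hp' : p' ∈ A) (hq' : q' ∈ A)
    (hmid : midpoint 𝕜 p' q' = midpoint 𝕜 p q) : p' ∈ segment 𝕜 p q :=
  h.left_mem_of_mem_openSegment hp' hq' (hmid ▸ midpoint_mem_segment p q)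
    (midpoint_mem_openSegment p' q')

end ExtremeSets

section Polytope

variable {G : SimpleGraph V} {u v : V}

theorem chi_empty : chi (∅ : Set V) = 0 := Set.indicator_empty _

theorem chi_singleton [DecidableEq V] (u : V) : chi ({u} : Set V) = Pi.single u 1 :=
  Set.indicator_singleton u _

theorem chi_pair [DecidableEq V] (huv : u ≠ v) :
    chi ({u, v} : Set V) = Pi.single u 1 + Pi.single v 1 := by
  ext w
  by_cases hu : w = u <;> by_cases hv : w = v <;> simp_all [chi]

theorem chi_singleton_injective : Function.Injective (fun u : V => chi ({u} : Set V)) := by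
  classical
  intro u v h
  simpa [chi_singleton, Pi.single_apply] using congrFun h u

theorem chi_apply_le_one (S : Set V) (w : V) : chi S w ≤ 1 :=
  Set.indicator_le_self' (fun _ _ => zero_le_one) w

theorem chi_apply_add_chi_apply_le_one {S : Set V} (h : u ∉ S ∨ v ∉ S) :
    chi S u + chi S v ≤ 1 := by
  rcases h with h | h
  · rw [chi, Set.indicator_of_notMem h, zero_add]
    exact chi_apply_le_one S v
  · rw [chi, Set.indicator_of_notMem h, add_zero]
    exact chi_apply_le_one S u

theorem chi_empty_mem_poly (G : SimpleGraph V) : chi (∅ : Set V) ∈ poly G :=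
  subset_convexHull ℝ _ (Or.inl rfl)

theorem chi_singleton_mem_poly (G : SimpleGraph V) (u : V) : chi ({u} : Set V) ∈ poly G :=
  subset_convexHull ℝ _ (Or.inr (Or.inl ⟨u, rfl⟩))

theorem chi_pair_mem_poly (huv : G.Adj u v) : chi ({u, v} : Set V) ∈ poly G :=
  subset_convexHull ℝ _ (Or.inr (Or.inr ⟨u, v, huv, rfl⟩))

theorem exists_eq_chi_of_mem_polyVerts {x : V → ℝ} (hx : x ∈ polyVerts G) :
    ∃ S : Set V, x = chi S := by
  rcases hx with rfl | ⟨u, rfl⟩ | ⟨u, v, -, rfl⟩ <;> exact ⟨_, rfl⟩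

theorem nonneg_of_mem_poly {x : V → ℝ} (hx : x ∈ poly G) : 0 ≤ x := by
  refine convexHull_min (fun y hy => ?_) (convex_Ici 0) hx
  obtain ⟨S, rfl⟩ := exists_eq_chi_of_mem_polyVerts hy
  exact Set.indicator_nonneg (fun _ _ => zero_le_one)

theorem apply_le_one_of_mem_poly {x : V → ℝ} (hx : x ∈ poly G) (w : V) : x w ≤ 1 := by
  refine convexHull_min (fun y hy => ?_)
    (convex_halfSpace_le (LinearMap.proj w : (V → ℝ) →ₗ[ℝ] ℝ).isLinear 1) hx
  obtain ⟨S, rfl⟩ := exists_eq_chi_of_mem_polyVerts hy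
  exact chi_apply_le_one S w

theorem add_apply_le_one_of_mem_poly (huv : u ≠ v) (h : ¬ G.Adj u v) {x : V → ℝ}
    (hx : x ∈ poly G) : x u + x v ≤ 1 := by
  refine convexHull_min (fun y hy => ?_)
    (convex_halfSpace_le
      ((LinearMap.proj u : (V → ℝ) →ₗ[ℝ] ℝ) + LinearMap.proj v).isLinear 1) hx
  show y u + y v ≤ 1
  rcases hy with rfl | ⟨w, rfl⟩ | ⟨a, b, hab, rfl⟩
  · exact chi_apply_add_chi_apply_le_one (Or.inl (Set.notMem_empty u))
  · exact chi_apply_add_chi_apply_le_one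
      (not_and_or.1 fun ⟨hu, hv⟩ => huv (hu.trans hv.symm))
  · refine chi_apply_add_chi_apply_le_one (not_and_or.1 fun ⟨hu, hv⟩ => ?_)
    rcases hu with rfl | rfl <;> rcases hv with rfl | rfl
    exacts [huv rfl, h hab, h hab.symm, huv rfl]

theorem isExtreme_poly_setOf_forall_apply_eq_zero (G : SimpleGraph V) (S : Set V) :
    IsExtreme ℝ (poly G) {x ∈ poly G | ∀ w ∉ S, x w = 0} :=
  isExtreme_setOf_forall_apply_eq_zero (fun _ hx => nonneg_of_mem_poly hx) S

theorem segment_chi_empty_chi_singleton (G : SimpleGraph V) (u : V) :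
    segment ℝ (chi (∅ : Set V)) (chi {u}) =
      {x ∈ poly G | ∀ w ∉ ({u} : Set V), x w = 0} := by
  classical
  ext x
  constructor
  · intro hx
    refine ⟨(convex_convexHull ℝ _).segment_subset (chi_empty_mem_poly G)
      (chi_singleton_mem_poly G u) hx, ?_⟩
    obtain ⟨a, b, -, -, -, rfl⟩ := hx
    intro w hw
    simp_all [chi_empty, chi_singleton]
  · rintro ⟨hx, hx0⟩
    refine ⟨1 - x u, x u, sub_nonneg.2 (apply_le_one_of_mem_poly hx u),
      nonneg_of_mem_poly hx u, by ring, ?_⟩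
    ext w
    by_cases hw : w = u
    · subst hw; simp [chi_empty, chi_singleton]
    · simp [chi_empty, chi_singleton, hw, hx0 w hw]

theorem segment_chi_singleton_chi_singleton (G : SimpleGraph V) (huv : u ≠ v) :
    segment ℝ (chi {u}) (chi {v}) =
      {x ∈ poly G | x u + x v = 1} ∩ {x ∈ poly G | ∀ w ∉ ({u, v} : Set V), x w = 0} := by
  classical
  ext x
  constructor
  · intro hx
    have hxP := (convex_convexHull ℝ _).segment_subset (chi_singleton_mem_poly G u)
      (chi_singleton_mem_poly G v) hx
    obtain ⟨a, b, -, -, hab, rfl⟩ := hx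
    refine ⟨⟨hxP, by simpa [chi_singleton, huv, huv.symm] using hab⟩, hxP, fun w hw => ?_⟩
    simp_all [chi_singleton]
  · rintro ⟨⟨hx, hsum⟩, -, hx0⟩
    refine ⟨x u, x v, nonneg_of_mem_poly hx u, nonneg_of_mem_poly hx v, hsum, ?_⟩
    ext w
    by_cases hu : w = u
    · subst hu; simp [chi_singleton, huv]
    by_cases hv : w = v
    · subst hv; simp [chi_singleton, hu]
    · simp [chi_singleton, hu, hv, hx0 w (by simp [hu, hv])]

theorem singleton_chi_singleton (G : SimpleGraph V) (u : V) :
    {chi {u}} = {x ∈ poly G | x u = 1} ∩ {x ∈ poly G | ∀ w ∉ ({u} : Set V), x w = 0} := by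
  classical
  ext x
  constructor
  · rintro rfl
    refine ⟨⟨chi_singleton_mem_poly G u, by simp [chi_singleton]⟩, chi_singleton_mem_poly G u,
      fun w hw => ?_⟩
    simp_all [chi_singleton]
  · rintro ⟨⟨-, hxu⟩, -, hx0⟩
    ext w
    by_cases hw : w = u
    · subst hw; simp [chi_singleton, hxu]
    · simp [chi_singleton, hw, hx0 w hw]

theorem isExtreme_segment_chi_empty_chi_singleton (G : SimpleGraph V) (u : V) :
    IsExtreme ℝ (poly G) (segment ℝ (chi (∅ : Set V)) (chi {u})) := by
  rw [segment_chi_empty_chi_singleton G u]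
  exact isExtreme_poly_setOf_forall_apply_eq_zero G _

theorem chi_singleton_mem_extremePoints (G : SimpleGraph V) (u : V) :
    chi {u} ∈ (poly G).extremePoints ℝ := by
  rw [← isExtreme_singleton, singleton_chi_singleton G u]
  exact (isExtreme_setOf_eq_of_le
    (LinearMap.proj u : (V → ℝ) →ₗ[ℝ] ℝ) fun _ hx => apply_le_one_of_mem_poly hx u).inter
    (isExtreme_poly_setOf_forall_apply_eq_zero G _)

theorem isExtreme_segment_chi_singleton_chi_singleton (huv : u ≠ v) (h : ¬ G.Adj u v) :
    IsExtreme ℝ (poly G) (segment ℝ (chi {u}) (chi {v})) := by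
  rw [segment_chi_singleton_chi_singleton G huv]
  exact (isExtreme_setOf_eq_of_le
    ((LinearMap.proj u : (V → ℝ) →ₗ[ℝ] ℝ) + LinearMap.proj v)
    fun _ hx => add_apply_le_one_of_mem_poly huv h hx).inter
    (isExtreme_poly_setOf_forall_apply_eq_zero G _)

theorem not_adjVert_chi_empty_chi_pair (huv : G.Adj u v) :
    ¬ AdjVert (poly G) (chi ∅) (chi {u, v}) := by
  classical
  rintro ⟨-, hface⟩
  have hmid : midpoint ℝ (chi {u}) (chi {v}) = midpoint ℝ (chi ∅) (chi {u, v}) := by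
    rw [chi_empty, chi_pair huv.ne, chi_singleton, chi_singleton, midpoint_zero_add]
  obtain ⟨_, b, -, -, -, h⟩ := hface.mem_segment_of_midpoint_eq (chi_singleton_mem_poly G u)
    (chi_singleton_mem_poly G v) hmid
  have hu : b = 1 := by
    simpa [chi_empty, chi_pair huv.ne, chi_singleton, huv.ne.symm] using congrFun h u
  have hv : b = 0 := by
    simpa [chi_empty, chi_pair huv.ne, chi_singleton, huv.ne] using congrFun h v
  exact one_ne_zero (hu.symm.trans hv)

theorem not_adjVert_chi_singleton_chi_singleton (huv : G.Adj u v) :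
    ¬ AdjVert (poly G) (chi {u}) (chi {v}) := by
  classical
  rintro ⟨-, hface⟩
  have hmid : midpoint ℝ (chi ∅) (chi {u, v}) = midpoint ℝ (chi {u}) (chi {v}) := by
    rw [chi_empty, chi_pair huv.ne, chi_singleton, chi_singleton, midpoint_zero_add]
  obtain ⟨a, b, -, -, hab, h⟩ := hface.mem_segment_of_midpoint_eq (chi_empty_mem_poly G)
    (chi_pair_mem_poly huv) hmid
  have hu : a = 0 := by simpa [chi_empty, chi_singleton, huv.ne.symm] using congrFun h u
  have hv : b = 0 := by simpa [chi_empty, chi_singleton, huv.ne] using congrFun h v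
  simp [hu, hv] at hab

end Polytope

theorem stmt10_general (G : SimpleGraph V) :
    {q | q ∈ (poly G).extremePoints ℝ ∧ AdjVert (poly G) (chi (∅ : Set V)) q} =
      {x | ∃ u : V, x = chi ({u} : Set V)} ∧
    Function.Injective (fun u : V => chi ({u} : Set V)) ∧
    (∀ u v : V,
      Gᶜ.Adj u v ↔ AdjVert (poly G) (chi ({u} : Set V)) (chi ({v} : Set V))) := by
  refine ⟨Set.ext fun q => ⟨?_, ?_⟩, chi_singleton_injective, fun u v => ?_⟩
  · rintro ⟨hq, hadj⟩
    rcases extremePoints_convexHull_subset hq with rfl | ⟨u, rfl⟩ | ⟨a, b, hab, rfl⟩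
    · exact absurd rfl hadj.1
    · exact ⟨u, rfl⟩
    · exact absurd hadj (not_adjVert_chi_empty_chi_pair hab)
  · rintro ⟨u, rfl⟩
    refine ⟨chi_singleton_mem_extremePoints G u, fun h => ?_,
      isExtreme_segment_chi_empty_chi_singleton G u⟩
    simpa [chi_empty, chi] using congrFun h u
  · rw [SimpleGraph.compl_adj]
    refine ⟨fun ⟨huv, h⟩ => ⟨chi_singleton_injective.ne huv,
      isExtreme_segment_chi_singleton_chi_singleton huv h⟩, fun hadj => ⟨?_, ?_⟩⟩
    · rintro rfl
      exact hadj.1 rfl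
    · exact fun h => not_adjVert_chi_singleton_chi_singleton h hadj

theorem stmt10 [Fintype V] [Nonempty V] (G : SimpleGraph V) :
    {q | q ∈ (poly G).extremePoints ℝ ∧ AdjVert (poly G) (chi (∅ : Set V)) q} =
      {x | ∃ u : V, x = chi ({u} : Set V)} ∧
    Function.Injective (fun u : V => chi ({u} : Set V)) ∧
    (∀ u v : V,
      Gᶜ.Adj u v ↔ AdjVert (poly G) (chi ({u} : Set V)) (chi ({v} : Set V))) :=
  stmt10_general G
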